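/- arXiv:1107.2466 — 4 statements merged into one kernel-verified Lean document; each statement's English description precedes it below -/
import Mathlib

section
/- Let R be a commutative ring, M a finitely generated projective R-module, f : M → R a surjective R-linear map, W = ker f, and ι : W → M the inclusion. Then for every s ≥ 1 the induced map Λ^sι : Λ^sW → Λ^sM is injective, the kernel of the contraction d_sf : Λ^sM → Λ^{s-1}M equals the image of Λ^sι, and the image of d_sf equals the image of Λ^{s-1}ι : Λ^{s-1}W → Λ^{s-1}M. In other words, there is a short exact sequence 0 → Λ^sW → Λ^sM → Λ^{s-1}W → 0 ('Pascal's rule'). -/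
open ExteriorAlgebra

section Aux

variable {R : Type*} [CommRing R] {M : Type*} [AddCommGroup M] [Module R M]
variable {N : Type*} [AddCommGroup N] [Module R N]

/-- Induction principle for exterior powers. -/
private lemma expow_induction (C : ℕ → ExteriorAlgebra R M → Prop)
    (halg : ∀ r : R, C 0 (algebraMap R (ExteriorAlgebra R M) r))
    (hadd : ∀ n x y, C n x → C n y → C n (x + y))
    (hmul : ∀ (n : ℕ) (m : M) x, C n x → C (n + 1) (ExteriorAlgebra.ι R m * x)) :
    ∀ (n : ℕ) (x : ExteriorAlgebra R M), x ∈ ⋀[R]^n M → C n x := by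
  intro n
  induction n with
  | zero =>
    intro x hx
    rw [exteriorPower, pow_zero] at hx
    obtain ⟨r, rfl⟩ := Submodule.mem_one.mp hx
    exact halg r
  | succ n ih =>
    intro x hx
    rw [exteriorPower, pow_succ'] at hx
    refine Submodule.mul_induction_on hx ?_ ?_
    · rintro _ ⟨m, rfl⟩ y hy
      exact hmul n m y (ih y hy)
    · intro x y hx hy
      exact hadd _ x y hx hy

private lemma map_mem_exteriorPower (g : M →ₗ[R] N) :
    ∀ (n : ℕ) (x : ExteriorAlgebra R M), x ∈ ⋀[R]^n M →
      ExteriorAlgebra.map g x ∈ ⋀[R]^n N := by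
  refine expow_induction _ ?_ ?_ ?_
  · intro r
    rw [AlgHom.commutes]
    rw [exteriorPower, pow_zero]
    exact Submodule.mem_one.mpr ⟨r, rfl⟩
  · intro n x y hx hy
    rw [map_add]
    exact add_mem hx hy
  · intro n m x hx
    rw [map_mul, map_apply_ι, exteriorPower, pow_succ']
    exact Submodule.mul_mem_mul (LinearMap.mem_range_self _ _) hx

/-- The contraction `contractLeft` satisfies the Koszul formula on `ιMulti`. -/
private lemma contractLeft_ιMulti (f : M →ₗ[R] R) :
    ∀ (n : ℕ) (v : Fin (n + 1) → M),
      CliffordAlgebra.contractLeft f (ExteriorAlgebra.ιMulti R (n + 1) v) =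
        ∑ j : Fin (n + 1), ((-1 : R) ^ (j : ℕ) * f (v j)) •
          ExteriorAlgebra.ιMulti R n (fun i => v (j.succAbove i)) := by
  intro n
  induction n with
  | zero =>
    intro v
    rw [ιMulti_succ_apply, CliffordAlgebra.contractLeft_ι_mul]
    simp
  | succ n ih =>
    intro v
    rw [ιMulti_succ_apply, CliffordAlgebra.contractLeft_ι_mul, ih,
      Finset.mul_sum, sub_eq_add_neg, ← Finset.sum_neg_distrib]
    conv_rhs => rw [Fin.sum_univ_succ]
    congr 1
    · simp [Matrix.vecTail, Function.comp_def]
    · refine Finset.sum_congr rfl fun j _ => ?_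
      have h1 : (fun i => v (j.succ.succAbove i)) =
          Fin.cons (v 0) (fun i => Matrix.vecTail v (j.succAbove i)) := by
        funext i
        refine Fin.cases ?_ ?_ i
        · simp
        · intro i
          simp [Matrix.vecTail]
      have h2 : Matrix.vecTail (Fin.cons (v 0) fun i => Matrix.vecTail v (j.succAbove i)) =
          fun i => Matrix.vecTail v (j.succAbove i) := by
        funext i
        simp [Matrix.vecTail]
      rw [h1, ιMulti_succ_apply, h2, Fin.cons_zero, mul_smul_comm, ← neg_smul]
      congr 1
      simp only [Matrix.vecTail, Function.comp_apply, Fin.val_succ, pow_succ]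
      ring

/-- contraction kills the image of the exterior algebra of the kernel. -/
private lemma contractLeft_map_subtype (f : M →ₗ[R] R) :
    ∀ (n : ℕ) (y : ExteriorAlgebra R ↥(LinearMap.ker f)),
      y ∈ ⋀[R]^n ↥(LinearMap.ker f) →
      CliffordAlgebra.contractLeft f
        (ExteriorAlgebra.map (LinearMap.ker f).subtype y) = 0 := by
  refine expow_induction _ ?_ ?_ ?_
  · intro r
    rw [AlgHom.commutes, CliffordAlgebra.contractLeft_algebraMap]
  · intro n x y hx hy
    rw [map_add, map_add, hx, hy, add_zero]
  · intro n w x hx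
    rw [map_mul, map_apply_ι, CliffordAlgebra.contractLeft_ι_mul, hx, mul_zero, sub_zero,
      Submodule.coe_subtype, LinearMap.mem_ker.mp w.2, zero_smul]

/-- The key identity: `x = P x + ι e * P (f ⌋ x)` where `P = map (id - f ⊗ e)`. -/
private lemma key_identity (f : M →ₗ[R] R) (e : M) (he : f e = 1) :
    ∀ (n : ℕ) (x : ExteriorAlgebra R M), x ∈ ⋀[R]^n M →
      x = ExteriorAlgebra.map (LinearMap.id - f.smulRight e) x
        + ExteriorAlgebra.ι R e * ExteriorAlgebra.map (LinearMap.id - f.smulRight e)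
            (CliffordAlgebra.contractLeft f x) := by
  refine expow_induction _ ?_ ?_ ?_
  · intro r
    rw [AlgHom.commutes, CliffordAlgebra.contractLeft_algebraMap, map_zero, mul_zero, add_zero]
  · intro n x y hx hy
    conv_lhs => rw [hx, hy]
    simp only [map_add, mul_add]
    abel
  · intro n m x hx
    have hπι : ExteriorAlgebra.ι R m =
        ExteriorAlgebra.ι R (((LinearMap.id : M →ₗ[R] M) - f.smulRight e) m)
          + f m • ExteriorAlgebra.ι R e := by
      simp only [LinearMap.sub_apply, LinearMap.id_apply, LinearMap.smulRight_apply, map_sub,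
        map_smul]
      abel
    rw [CliffordAlgebra.contractLeft_ι_mul, map_mul, map_apply_ι, map_sub, map_smul, map_mul,
      map_apply_ι]
    conv_lhs => rw [hx, hπι]
    have hAE : ExteriorAlgebra.ι R (((LinearMap.id : M →ₗ[R] M) - f.smulRight e) m)
          * ExteriorAlgebra.ι R e =
        -(ExteriorAlgebra.ι R e
          * ExteriorAlgebra.ι R (((LinearMap.id : M →ₗ[R] M) - f.smulRight e) m)) :=
      eq_neg_of_add_eq_zero_left (ι_add_mul_swap _ e)
    have hEE : ExteriorAlgebra.ι R e * ExteriorAlgebra.ι R e = 0 := ι_sq_zero e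
    rw [add_mul, mul_add, mul_add, smul_mul_assoc, smul_mul_assoc]
    rw [← mul_assoc, ← mul_assoc, hAE, hEE, zero_mul, smul_zero, add_zero]
    rw [mul_sub, mul_smul_comm, neg_mul]
    simp only [mul_assoc]
    abel

end Aux

/-- `KoszulFormula f n d` says that the linear map `d : ⋀^{n+1} M → ⋀^n M` is given on
wedges of vectors by the contraction formula
`d (v₁ ∧ ⋯ ∧ v_{n+1}) = ∑ⱼ (-1)^j · f(v_j) · v₁ ∧ ⋯ ∧ v̂ⱼ ∧ ⋯ ∧ v_{n+1}`. -/
def KoszulFormula {R : Type*} [CommRing R] {M : Type*} [AddCommGroup M] [Module R M]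
    (f : M →ₗ[R] R) (n : ℕ) (d : ⋀[R]^(n + 1) M →ₗ[R] ⋀[R]^n M) : Prop :=
  ∀ (v : Fin (n + 1) → M) (x : ⋀[R]^(n + 1) M),
    (x : ExteriorAlgebra R M) = ExteriorAlgebra.ιMulti R (n + 1) v →
    (d x : ExteriorAlgebra R M) =
      ∑ j : Fin (n + 1),
        ((-1 : R) ^ (j : ℕ) * f (v j)) •
          ExteriorAlgebra.ιMulti R n (fun i => v (j.succAbove i))

/-- **Pascal's rule.** Let `M` be a finitely generated projective module over a
commutative ring `R`, `f : M → R` a surjective linear map, `W = ker f` with inclusion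
`ι : W → M`.  For every `s = n+1 ≥ 1`, the induced map `⋀^s ι : ⋀^s W → ⋀^s M` is injective,
the kernel of the contraction `d_sf : ⋀^s M → ⋀^{s-1} M` equals the image of `⋀^s ι`, and the
image of `d_sf` equals the image of `⋀^{s-1} ι`; i.e. there is a short exact sequence
`0 → ⋀^s W → ⋀^s M → ⋀^{s-1} W → 0`. -/
theorem pascal_rule_koszul
    (R : Type*) [CommRing R] (M : Type*) [AddCommGroup M] [Module R M]
    [Module.Finite R M] [Module.Projective R M]
    (f : M →ₗ[R] R) (hf : Function.Surjective f) (n : ℕ)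
    (d : ⋀[R]^(n + 1) M →ₗ[R] ⋀[R]^n M) (hd : KoszulFormula f n d)
    (ψ : ⋀[R]^(n + 1) ↥(LinearMap.ker f) →ₗ[R] ⋀[R]^(n + 1) M)
    (hψ : ∀ x : ⋀[R]^(n + 1) ↥(LinearMap.ker f),
      (ψ x : ExteriorAlgebra R M) =
        ExteriorAlgebra.map (LinearMap.ker f).subtype
          (x : ExteriorAlgebra R ↥(LinearMap.ker f)))
    (ψ' : ⋀[R]^n ↥(LinearMap.ker f) →ₗ[R] ⋀[R]^n M)
    (hψ' : ∀ x : ⋀[R]^n ↥(LinearMap.ker f),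
      (ψ' x : ExteriorAlgebra R M) =
        ExteriorAlgebra.map (LinearMap.ker f).subtype
          (x : ExteriorAlgebra R ↥(LinearMap.ker f))) :
    Function.Injective ψ ∧
    LinearMap.ker d = LinearMap.range ψ ∧
    LinearMap.range d = LinearMap.range ψ' := by
  unfold KoszulFormula at hd
  obtain ⟨e, he⟩ := hf 1
  -- the projection onto the kernel
  have hπmem : ∀ m : M, ((LinearMap.id : M →ₗ[R] M) - f.smulRight e) m ∈ LinearMap.ker f := by
    intro m
    simp [he, LinearMap.mem_ker, smul_eq_mul]
  let r : M →ₗ[R] ↥(LinearMap.ker f) :=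
    ((LinearMap.id : M →ₗ[R] M) - f.smulRight e).codRestrict _ hπmem
  have hrs : r ∘ₗ (LinearMap.ker f).subtype = LinearMap.id := by
    refine LinearMap.ext fun w => Subtype.ext ?_
    simp [r, LinearMap.mem_ker.mp w.2]
  have hsub : (LinearMap.ker f).subtype ∘ₗ r = (LinearMap.id : M →ₗ[R] M) - f.smulRight e := by
    rfl
  -- injectivity of the algebra map induced by the inclusion
  have hsubinj : Function.Injective
      (ExteriorAlgebra.map (M := ↥(LinearMap.ker f)) (LinearMap.ker f).subtype) := by
    have hcomp : (ExteriorAlgebra.map r).comp (ExteriorAlgebra.map (LinearMap.ker f).subtype) =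
        AlgHom.id R (ExteriorAlgebra R ↥(LinearMap.ker f)) := by
      rw [map_comp_map, hrs, map_id]
    intro x y hxy
    have h1 : ExteriorAlgebra.map r (ExteriorAlgebra.map (LinearMap.ker f).subtype x) =
        ExteriorAlgebra.map r (ExteriorAlgebra.map (LinearMap.ker f).subtype y) := by rw [hxy]
    rwa [← AlgHom.comp_apply, ← AlgHom.comp_apply, hcomp, AlgHom.id_apply, AlgHom.id_apply] at h1
  have hψinj : Function.Injective ψ := by
    intro x y hxy
    have h1 : (ψ x : ExteriorAlgebra R M) = (ψ y : ExteriorAlgebra R M) := by rw [hxy]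
    rw [hψ x, hψ y] at h1
    exact Subtype.ext (hsubinj h1)
  -- identification of d with contractLeft
  have hdD : ∀ x : ⋀[R]^(n+1) M,
      (d x : ExteriorAlgebra R M) =
        CliffordAlgebra.contractLeft f (x : ExteriorAlgebra R M) := by
    have hle : Submodule.span R (Set.range (ExteriorAlgebra.ιMulti R (n+1) (M := M))) ≤
        ⋀[R]^(n+1) M := (ιMulti_span_fixedDegree R (n+1)).le
    have main : ∀ z, z ∈ Submodule.span R
        (Set.range (ExteriorAlgebra.ιMulti R (n+1) (M := M))) →
        ∀ hz : z ∈ ⋀[R]^(n+1) M,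
          (d ⟨z, hz⟩ : ExteriorAlgebra R M) = CliffordAlgebra.contractLeft f z := by
      intro z hz
      induction hz using Submodule.span_induction with
      | mem z hz' =>
        obtain ⟨v, rfl⟩ := hz'
        intro h
        exact (hd v ⟨_, h⟩ rfl).trans (contractLeft_ιMulti f n v).symm
      | zero =>
        intro h
        have : (⟨0, h⟩ : ⋀[R]^(n+1) M) = 0 := rfl
        rw [this]
        simp
      | add x y hx hy ihx ihy =>
        intro h
        have hx' := hle hx
        have hy' := hle hy
        have : (⟨x + y, h⟩ : ⋀[R]^(n+1) M) = ⟨x, hx'⟩ + ⟨y, hy'⟩ := rfl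
        rw [this, map_add, Submodule.coe_add, map_add, ihx hx', ihy hy']
      | smul c x hx ihx =>
        intro h
        have hx' := hle hx
        have : (⟨c • x, h⟩ : ⋀[R]^(n+1) M) = c • ⟨x, hx'⟩ := rfl
        rw [this, map_smul, Submodule.coe_smul, map_smul, ihx hx']
    intro x
    exact main x ((ιMulti_span_fixedDegree R (n+1)).ge x.2) x.2
  refine ⟨hψinj, ?_, ?_⟩
  · -- ker d = range ψ
    apply le_antisymm
    · intro x hx
      have hx0 : d x = 0 := LinearMap.mem_ker.mp hx
      have h0 : CliffordAlgebra.contractLeft f (x : ExteriorAlgebra R M) = 0 := by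
        rw [← hdD, hx0, Submodule.coe_zero]
      have hkey := key_identity f e he (n+1) (x : ExteriorAlgebra R M) x.2
      rw [h0, map_zero, mul_zero, add_zero] at hkey
      refine ⟨⟨ExteriorAlgebra.map r (x : ExteriorAlgebra R M),
        map_mem_exteriorPower r (n+1) _ x.2⟩, Subtype.ext ?_⟩
      rw [hψ]
      show ExteriorAlgebra.map (LinearMap.ker f).subtype
        (ExteriorAlgebra.map r (x : ExteriorAlgebra R M)) = (x : ExteriorAlgebra R M)
      rw [← AlgHom.comp_apply, map_comp_map, hsub, ← hkey]
    · rintro _ ⟨z, rfl⟩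
      refine LinearMap.mem_ker.mpr (Subtype.ext ?_)
      have h1 := hdD (ψ z)
      rw [hψ] at h1
      rw [h1, contractLeft_map_subtype f (n+1) _ z.2, Submodule.coe_zero]
  · -- range d = range ψ'
    apply le_antisymm
    · rintro _ ⟨x, rfl⟩
      have hDD : CliffordAlgebra.contractLeft f ((d x : ExteriorAlgebra R M)) = 0 := by
        rw [hdD]
        exact CliffordAlgebra.contractLeft_contractLeft _ _
      have hkey := key_identity f e he n (d x : ExteriorAlgebra R M) (d x).2
      rw [hDD, map_zero, mul_zero, add_zero] at hkey
      refine ⟨⟨ExteriorAlgebra.map r (d x : ExteriorAlgebra R M),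
        map_mem_exteriorPower r n _ (d x).2⟩, Subtype.ext ?_⟩
      rw [hψ']
      show ExteriorAlgebra.map (LinearMap.ker f).subtype
        (ExteriorAlgebra.map r (d x : ExteriorAlgebra R M)) = ((d x : ExteriorAlgebra R M))
      rw [← AlgHom.comp_apply, map_comp_map, hsub, ← hkey]
    · rintro _ ⟨y, rfl⟩
      have hmem : ExteriorAlgebra.ι R e * ((ψ' y : ExteriorAlgebra R M)) ∈ ⋀[R]^(n+1) M := by
        have h : ExteriorAlgebra.ι R e * ((ψ' y : ExteriorAlgebra R M)) ∈
            LinearMap.range (ExteriorAlgebra.ι R (M := M)) * ⋀[R]^n M :=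
          Submodule.mul_mem_mul (LinearMap.mem_range_self _ e) (ψ' y).2
        rwa [← pow_succ'] at h
      refine ⟨⟨_, hmem⟩, Subtype.ext ?_⟩
      rw [hdD]
      show CliffordAlgebra.contractLeft f
        (ExteriorAlgebra.ι R e * (ψ' y : ExteriorAlgebra R M)) = (ψ' y : ExteriorAlgebra R M)
      rw [CliffordAlgebra.contractLeft_ι_mul, he, one_smul]
      rw [hψ' y, contractLeft_map_subtype f n _ y.2, mul_zero, sub_zero]
end

section
/- Let R be a commutative ring, M a finitely generated projective R-module, and L ⊆ M a submodule which is a direct summand of M and is projective of rank 1 (its localization at every prime ideal of R is free of rank 1). Let g : M → M/L be the quotient map and s ≥ 1. Then the kernel of the induced map Λ^sg : Λ^sM → Λ^s(M/L) equals the submodule L∧Λ^{s-1}M of Λ^sM generated by all elements ℓ ∧ ω with ℓ ∈ L and ω ∈ Λ^{s-1}M, and this kernel is isomorphic as an R-module to L ⊗_R Λ^{s-1}(M/L). -/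
open ExteriorAlgebra

/-- A module is finitely generated projective of rank `n` if it is finitely generated,
projective, and its localization at every prime ideal of `R` is free of rank `n`. -/
def IsFGProjOfRank (R : Type*) [CommRing R] (M : Type*) [AddCommGroup M] [Module R M]
    (n : ℕ) : Prop :=
  Module.Finite R M ∧ Module.Projective R M ∧
    ∀ (P : Ideal R) [P.IsPrime],
      Module.Free (Localization.AtPrime P) (LocalizedModule P.primeCompl M) ∧
      Module.finrank (Localization.AtPrime P) (LocalizedModule P.primeCompl M) = n

/-!
A complement `L'` of `L` gives a section `σ : M/L → M` of the quotient map `g` and a projection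
`p : M → L`. For `x ∈ ΛˢM`, `x - Λ(σ ∘ g) x` lies in `L ∧ Λˢ⁻¹M`, and `Λ(σ ∘ g) x = 0` when
`Λg x = 0`; this identifies the kernel. As `L` is locally free of rank one, `ℓ ∧ ℓ' = 0` for
`ℓ, ℓ' ∈ L`, hence `ℓ ∧ v = ℓ ∧ Λσ (Λg v)`, so the kernel is the image of `ℓ ⊗ ω ↦ ℓ ∧ Λσ ω` on
`L ⊗ Λˢ⁻¹(M/L)`. That map is injective because `L` is flat and the map has a left inverse on
`L ⊗ Λ(M/L)`: the `L ⊗ Λ(M/L)`-component of `Λ(L ⊕ M/L)`, computed by letting `ΛM` act on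
`Λ(M/L) × (L ⊗ Λ(M/L))`.
-/

open TensorProduct

section

variable {R : Type*} [CommRing R] {M : Type*} [AddCommGroup M] [Module R M]

section RankOne

variable {V : Type*} [AddCommGroup V] [Module R V]

theorem exists_forall_smul_eq_smul_of_finrank_localization_eq_one (P : Ideal R) [P.IsPrime]
    [Module.Free (Localization.AtPrime P) (LocalizedModule P.primeCompl V)]
    (h : Module.finrank (Localization.AtPrime P) (LocalizedModule P.primeCompl V) = 1) :
    ∃ v₀ : V, ∀ v : V, ∃ a ∈ P.primeCompl, ∃ r : R, a • v = r • v₀ := by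
  have : Module.Finite (Localization.AtPrime P) (LocalizedModule P.primeCompl V) :=
    Module.finite_of_finrank_eq_succ h
  let e := Module.finBasisOfFinrankEq _ _ h
  let f := LocalizedModule.mkLinearMap P.primeCompl V
  obtain ⟨⟨v₀, t⟩, ht⟩ := IsLocalizedModule.surj P.primeCompl f (e 0)
  refine ⟨v₀, fun v => ?_⟩
  obtain ⟨⟨r, u⟩, hu⟩ := IsLocalization.surj P.primeCompl (e.repr (f v) 0)
  have hv : f v = e.repr (f v) 0 • e 0 := by
    simpa using (e.sum_repr (f v)).symm
  have hfv : f ((u * t : R) • v) = f (r • v₀) := by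
    rw [map_smul, map_smul, ← ht, mul_comm, mul_smul, hv, smul_smul]
    simp only [Submonoid.smul_def, smul_smul,
      ← algebraMap_smul (Localization.AtPrime P) (_ * _ : R), map_mul, ← hu]
    ring_nf
  obtain ⟨w, hw⟩ := (IsLocalizedModule.eq_iff_exists P.primeCompl f).mp hfv
  refine ⟨w * (u * t), mul_mem w.2 (mul_mem u.2 t.2), w * r, ?_⟩
  simpa only [mul_smul, Submonoid.smul_def] using hw

theorem eq_zero_of_forall_isMaximal_exists_smul_eq_zero {N : Type*} [AddCommGroup N]
    [Module R N] (x : N) (h : ∀ (P : Ideal R) [P.IsMaximal], ∃ a ∉ P, a • x = 0) : x = 0 :=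
  Module.eq_zero_of_localization_maximal _ (fun P _ => LocalizedModule.mkLinearMap P.primeCompl N)
    x fun P _ => (IsLocalizedModule.eq_zero_iff P.primeCompl _).mpr <| by
      obtain ⟨a, ha, hx⟩ := h P
      exact ⟨⟨a, ha⟩, hx⟩

theorem ExteriorAlgebra.ι_mul_ι_eq_zero_of_finrank_localization_eq_one (j : V →ₗ[R] M)
    (hV : ∀ (P : Ideal R) [P.IsMaximal],
      Module.Free (Localization.AtPrime P) (LocalizedModule P.primeCompl V) ∧
      Module.finrank (Localization.AtPrime P) (LocalizedModule P.primeCompl V) = 1)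
    (a b : V) : ι R (j a) * ι R (j b) = 0 := by
  refine eq_zero_of_forall_isMaximal_exists_smul_eq_zero (R := R) _ fun P _ => ?_
  have := (hV P).1
  obtain ⟨v₀, hv₀⟩ := exists_forall_smul_eq_smul_of_finrank_localization_eq_one P (hV P).2
  obtain ⟨α, hα, ρ, ha⟩ := hv₀ a
  obtain ⟨β, hβ, ρ', hb⟩ := hv₀ b
  refine ⟨α * β, P.primeCompl.mul_mem hα hβ, ?_⟩
  calc (α * β : R) • (ι R (j a) * ι R (j b)) = ι R (j (α • a)) * ι R (j (β • b)) := by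
        rw [map_smul, map_smul, map_smul, map_smul, smul_mul_smul_comm]
    _ = 0 := by
        rw [ha, hb, map_smul, map_smul, map_smul, map_smul, smul_mul_smul_comm, ι_sq_zero,
          smul_zero]

end RankOne

namespace ExteriorAlgebra

variable {N : Type*} [AddCommGroup N] [Module R N]

theorem map_mem_exteriorPower (f : M →ₗ[R] N) {k : ℕ} {x : ExteriorAlgebra R M}
    (hx : x ∈ ⋀[R]^k M) : map f x ∈ ⋀[R]^k N := by
  have hι : (LinearMap.range (ι R : M →ₗ[R] _)).map (map f).toLinearMap ≤
      LinearMap.range (ι R) := by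
    rintro _ ⟨_, ⟨m, rfl⟩, rfl⟩
    exact ⟨f m, (map_apply_ι f m).symm⟩
  have := Submodule.mem_map_of_mem (f := (map f).toLinearMap) hx
  rw [Submodule.map_pow] at this
  exact pow_le_pow_left' hι k this

theorem range_ι_mul_range_ι_comp_le (j : N →ₗ[R] M) :
    LinearMap.range (ι R : M →ₗ[R] _) * LinearMap.range (ι R ∘ₗ j) ≤
      LinearMap.range (ι R ∘ₗ j) * LinearMap.range (ι R) := by
  rw [Submodule.mul_le]
  rintro _ ⟨m, rfl⟩ _ ⟨n, rfl⟩
  rw [LinearMap.comp_apply, eq_neg_of_add_eq_zero_left (ι_add_mul_swap m (j n))]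
  exact neg_mem (Submodule.mul_mem_mul ⟨n, rfl⟩ ⟨m, rfl⟩)

theorem range_ι_comp_mul_exteriorPower_le (j : N →ₗ[R] M) (k : ℕ) :
    LinearMap.range (ι R ∘ₗ j) * ⋀[R]^k M ≤ ⋀[R]^(k + 1) M := by
  simp only [exteriorPower, pow_succ']
  exact mul_le_mul' (LinearMap.range_comp_le_range _ _) le_rfl

section Submodule

variable (L : Submodule R M)

theorem sub_map_mem_range_ι_mul_exteriorPower {f : M →ₗ[R] M} (hf : ∀ m, m - f m ∈ L) (k : ℕ)
    {x : ExteriorAlgebra R M} (hx : x ∈ ⋀[R]^(k + 1) M) :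
    x - map f x ∈ LinearMap.range (ι R ∘ₗ L.subtype) * ⋀[R]^k M := by
  induction k generalizing x with
  | zero =>
    rw [zero_add, exteriorPower, pow_one] at hx
    obtain ⟨m, rfl⟩ := hx
    rw [map_apply_ι, ← map_sub, exteriorPower, pow_zero, Submodule.mul_one]
    exact ⟨⟨_, hf m⟩, rfl⟩
  | succ k ih =>
    have hle : LinearMap.range (ι R) * (LinearMap.range (ι R ∘ₗ L.subtype) * ⋀[R]^k M) ≤
        LinearMap.range (ι R ∘ₗ L.subtype) * ⋀[R]^(k + 1) M := by
      simp only [exteriorPower, pow_succ', ← mul_assoc]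
      exact mul_le_mul' (range_ι_mul_range_ι_comp_le _) le_rfl
    rw [exteriorPower, pow_succ'] at hx
    refine Submodule.mul_induction_on hx ?_ ?_
    · rintro _ ⟨m, rfl⟩ y hy
      have hsplit : ι R m * y - map f (ι R m * y) =
          ι R (m - f m) * y + ι R (f m) * (y - map f y) := by
        rw [map_mul, map_apply_ι, map_sub, sub_mul, mul_sub]; abel
      rw [hsplit]
      exact add_mem (Submodule.mul_mem_mul ⟨⟨_, hf m⟩, rfl⟩ hy)
        (hle (Submodule.mul_mem_mul ⟨f m, rfl⟩ (ih hy)))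
    · intro a b ha hb
      rw [map_add, add_sub_add_comm]
      exact add_mem ha hb

theorem map_mkQ_eq_zero_of_mem_range_ι_mul {T : Submodule R (ExteriorAlgebra R M)}
    {x : ExteriorAlgebra R M} (hx : x ∈ LinearMap.range (ι R ∘ₗ L.subtype) * T) :
    map L.mkQ x = 0 := by
  refine Submodule.mul_induction_on hx ?_ fun a b ha hb => by rw [map_add, ha, hb, add_zero]
  rintro _ ⟨ℓ, rfl⟩ t -
  simp [(Submodule.Quotient.mk_eq_zero L).mpr ℓ.2]

variable {L} {σ : M ⧸ L →ₗ[R] M} (hσ : ∀ z, L.mkQ (σ z) = z)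
include hσ

theorem sub_map_section_mkQ_mem (m : M) : m - σ (L.mkQ m) ∈ L := by
  rw [← Submodule.Quotient.mk_eq_zero, ← L.mkQ_apply, map_sub, hσ, sub_self]

theorem map_mkQ_eq_zero_iff {k : ℕ} {x : ExteriorAlgebra R M} (hx : x ∈ ⋀[R]^(k + 1) M) :
    map L.mkQ x = 0 ↔ x ∈ LinearMap.range (ι R ∘ₗ L.subtype) * ⋀[R]^k M := by
  refine ⟨fun h => ?_, map_mkQ_eq_zero_of_mem_range_ι_mul L⟩
  have := sub_map_mem_range_ι_mul_exteriorPower L (f := σ ∘ₗ L.mkQ)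
    (sub_map_section_mkQ_mem hσ) k hx
  rwa [← map_comp_map, AlgHom.comp_apply, h, map_zero, sub_zero] at this

end Submodule

section TruncatedMul

variable {Q P : Type*} [AddCommGroup Q] [Module R Q] [AddCommGroup P] [Module R P]

/-- `ΛQ × (P ⊗ ΛQ)` is `Λ(P ⊕ Q)` modulo the ideal generated by `Λ²P`, and `truncatedMulι q p m`
is left multiplication by `p m + q m` there; the sign comes from moving `q m` past `P`. -/
noncomputable def truncatedMulι (q : M →ₗ[R] Q) (p : M →ₗ[R] P) :
    M →ₗ[R] Module.End R (ExteriorAlgebra R Q × (P ⊗[R] ExteriorAlgebra R Q)) :=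
  LinearMap.mk₂ R
    (fun m x => (ι R (q m) * x.1, p m ⊗ₜ x.1 - (LinearMap.mul R _ (ι R (q m))).lTensor P x.2))
    (fun m m' x => by
      ext
      · simp [add_mul]
      · simp only [map_add, add_tmul, LinearMap.lTensor_add, LinearMap.add_apply, Prod.mk_add_mk]
        abel)
    (fun c m x => by ext <;> simp [smul_tmul', LinearMap.lTensor_smul, smul_sub])
    (fun m x y => by
      ext
      · simp [mul_add]
      · simp only [Prod.fst_add, tmul_add, Prod.snd_add, map_add, Prod.mk_add_mk]
        abel)
    (fun c m x => by ext <;> simp [smul_sub])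

variable (q : M →ₗ[R] Q) (p : M →ₗ[R] P)

theorem truncatedMulι_apply (m : M) (x : ExteriorAlgebra R Q × (P ⊗[R] ExteriorAlgebra R Q)) :
    truncatedMulι q p m x =
      (ι R (q m) * x.1, p m ⊗ₜ x.1 - (LinearMap.mul R _ (ι R (q m))).lTensor P x.2) := rfl

theorem truncatedMulι_mul_self (m : M) : truncatedMulι q p m * truncatedMulι q p m = 0 := by
  have hsq : LinearMap.mul R _ (ι R (q m)) ∘ₗ LinearMap.mul R _ (ι R (q m)) = 0 := by
    ext; simp [← mul_assoc]
  refine LinearMap.ext fun x => Prod.ext ?_ ?_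
  · simp [truncatedMulι_apply, ← mul_assoc]
  · simp [truncatedMulι_apply, ← LinearMap.lTensor_comp_apply, hsq]

noncomputable def truncatedMul :
    ExteriorAlgebra R M →ₐ[R] Module.End R (ExteriorAlgebra R Q × (P ⊗[R] ExteriorAlgebra R Q)) :=
  lift R ⟨truncatedMulι q p, truncatedMulι_mul_self q p⟩

theorem truncatedMul_ι (m : M) : truncatedMul q p (ι R m) = truncatedMulι q p m :=
  lift_ι_apply ..

noncomputable def ιMulMap (j : P →ₗ[R] M) (σ : Q →ₗ[R] M) :
    P ⊗[R] ExteriorAlgebra R Q →ₗ[R] ExteriorAlgebra R M :=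
  TensorProduct.lift ((LinearMap.mul R _).compl₂ (map σ).toLinearMap ∘ₗ ι R ∘ₗ j)

theorem ιMulMap_tmul (j : P →ₗ[R] M) (σ : Q →ₗ[R] M) (ℓ : P) (ω : ExteriorAlgebra R Q) :
    ιMulMap j σ (ℓ ⊗ₜ ω) = ι R (j ℓ) * map σ ω := rfl

variable {q p} {σ : Q →ₗ[R] M} (hqσ : ∀ z, q (σ z) = z) (hpσ : ∀ z, p (σ z) = 0)
include hqσ hpσ

theorem truncatedMul_map_apply (v τ : ExteriorAlgebra R Q) :
    truncatedMul q p (map σ v) (τ, 0) = (v * τ, 0) := by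
  induction v using ExteriorAlgebra.induction generalizing τ with
  | algebraMap r => simp [Algebra.smul_def]
  | ι z => simp [truncatedMul_ι, truncatedMulι_apply, hqσ, hpσ]
  | mul a b ha hb => simp [hb, ha, mul_assoc]
  | add a b ha hb => simp [ha, hb, add_mul]

theorem truncatedMul_ι_mul_map_apply {m : M} (hm : q m = 0) (ω : ExteriorAlgebra R Q) :
    truncatedMul q p (ι R m * map σ ω) (1, 0) = (0, p m ⊗ₜ ω) := by
  simp [truncatedMul_map_apply hqσ hpσ, truncatedMul_ι, truncatedMulι_apply, hm]

theorem injective_ιMulMap {j : P →ₗ[R] M} (hqj : ∀ ℓ, q (j ℓ) = 0) (hpj : ∀ ℓ, p (j ℓ) = ℓ) :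
    Function.Injective (ιMulMap j σ) := by
  let retraction : ExteriorAlgebra R M →ₗ[R] P ⊗[R] ExteriorAlgebra R Q :=
    LinearMap.snd R _ _ ∘ₗ LinearMap.applyₗ (1, 0) ∘ₗ (truncatedMul q p).toLinearMap
  have : retraction ∘ₗ ιMulMap j σ = LinearMap.id := by
    refine TensorProduct.ext' fun ℓ ω => ?_
    change (truncatedMul q p (ι R (j ℓ) * map σ ω) (1, 0)).2 = ℓ ⊗ₜ ω
    rw [truncatedMul_ι_mul_map_apply hqσ hpσ (hqj ℓ), hpj]
  exact Function.LeftInverse.injective (g := retraction) (LinearMap.congr_fun this)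

end TruncatedMul

section RankOneSubmodule

variable {L : Submodule R M} (hL : ∀ a b : L, ι R (a : M) * ι R (b : M) = 0)
include hL

theorem ι_mul_map_eq_ι_mul {f : M →ₗ[R] M} (hf : ∀ m, m - f m ∈ L) (ℓ : L)
    (v : ExteriorAlgebra R M) : ι R (ℓ : M) * map f v = ι R (ℓ : M) * v := by
  induction v using CliffordAlgebra.left_induction with
  | algebraMap r => rw [AlgHom.commutes]
  | add a b ha hb => rw [map_add, mul_add, mul_add, ha, hb]
  | ι_mul v m hv =>
    have hfm : ι R (ℓ : M) * ι R (f m) = ι R (ℓ : M) * ι R m := by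
      have := hL ℓ ⟨_, hf m⟩
      rwa [map_sub, mul_sub, sub_eq_zero, eq_comm] at this
    have hswap := eq_neg_of_add_eq_zero_left (ι_add_mul_swap (R := R) (ℓ : M) m)
    calc ι R (ℓ : M) * map f (ι R m * v) = -(ι R m * (ι R (ℓ : M) * map f v)) := by
          rw [map_mul, map_apply_ι, ← mul_assoc, hfm, hswap, neg_mul, mul_assoc]
      _ = ι R (ℓ : M) * (ι R m * v) := by
          rw [hv, ← mul_assoc, ← neg_mul, ← hswap, mul_assoc]

theorem range_ιMulMap_comp_lTensor_exteriorPower {σ : M ⧸ L →ₗ[R] M}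
    (hσ : ∀ z, L.mkQ (σ z) = z) (k : ℕ) :
    LinearMap.range (ιMulMap L.subtype σ ∘ₗ (⋀[R]^k (M ⧸ L)).subtype.lTensor L) =
      LinearMap.range (ι R ∘ₗ L.subtype) * ⋀[R]^k M := by
  refine le_antisymm ?_ ?_
  · rintro _ ⟨t, rfl⟩
    induction t using TensorProduct.induction_on with
    | zero => simp
    | tmul ℓ ω =>
      exact Submodule.mul_mem_mul (LinearMap.mem_range_self _ ℓ) (map_mem_exteriorPower σ ω.2)
    | add t t' ht ht' => rw [map_add]; exact add_mem ht ht'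
  · rw [Submodule.mul_le]
    rintro _ ⟨ℓ, rfl⟩ v hv
    refine ⟨ℓ ⊗ₜ ⟨map L.mkQ v, map_mem_exteriorPower _ hv⟩, ?_⟩
    change ι R (ℓ : M) * map σ (map L.mkQ v) = ι R (ℓ : M) * v
    rw [← AlgHom.comp_apply, map_comp_map,
      ι_mul_map_eq_ι_mul hL (f := σ ∘ₗ L.mkQ) (sub_map_section_mkQ_mem hσ)]

end RankOneSubmodule

end ExteriorAlgebra

end

theorem kernel_exteriorPower_quotient_map_general
    (R : Type*) [CommRing R] (M : Type*) [AddCommGroup M] [Module R M]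
    (L : Submodule R M) (hsummand : ∃ L' : Submodule R M, IsCompl L L')
    (hL : IsFGProjOfRank R ↥L 1) (s : ℕ) (hs : 1 ≤ s)
    (ψ : ⋀[R]^s M →ₗ[R] ⋀[R]^s (M ⧸ L))
    (hψ : ∀ x : ⋀[R]^s M,
      (ψ x : ExteriorAlgebra R (M ⧸ L)) = ExteriorAlgebra.map L.mkQ (x : ExteriorAlgebra R M)) :
    (∀ x : ⋀[R]^s M, ψ x = 0 ↔
      (x : ExteriorAlgebra R M) ∈
        LinearMap.range (ExteriorAlgebra.ι R ∘ₗ L.subtype) *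
          (LinearMap.range (ExteriorAlgebra.ι R : M →ₗ[R] ExteriorAlgebra R M)) ^ (s - 1)) ∧
    Nonempty (↥(LinearMap.ker ψ) ≃ₗ[R] TensorProduct R ↥L ↥(⋀[R]^(s - 1) (M ⧸ L))) := by
  obtain ⟨L', hLL'⟩ := hsummand
  obtain ⟨k, rfl⟩ := Nat.exists_eq_add_of_le' hs
  simp only [Nat.add_sub_cancel]
  have : Module.Projective R L := hL.2.1
  let σ : M ⧸ L →ₗ[R] M := L'.subtype ∘ₗ (L.quotientEquivOfIsCompl L' hLL').toLinearMap
  have hσ : ∀ z, L.mkQ (σ z) = z := Submodule.mk_quotientEquivOfIsCompl_apply hLL'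
  have hker : ∀ x, ψ x = 0 ↔ (x : ExteriorAlgebra R M) ∈
      LinearMap.range (ι R ∘ₗ L.subtype) * ⋀[R]^k M := fun x => by
    rw [← Submodule.coe_eq_zero, hψ]
    exact map_mkQ_eq_zero_iff hσ x.2
  refine ⟨hker, ⟨?_⟩⟩
  let Φ := ιMulMap L.subtype σ ∘ₗ (⋀[R]^k (M ⧸ L)).subtype.lTensor L
  have hΦ : Function.Injective Φ :=
    (injective_ιMulMap (p := L.projectionOnto L' hLL') hσ
      (fun z => Submodule.projectionOnto_apply_right hLL' _) (fun ℓ => by simp)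
      (Submodule.projectionOnto_apply_left hLL')).comp
    (Module.Flat.lTensor_preserves_injective_linearMap _ (Submodule.injective_subtype _))
  have hrange : (LinearMap.ker ψ).map (⋀[R]^(k + 1) M).subtype = LinearMap.range Φ := by
    rw [range_ιMulMap_comp_lTensor_exteriorPower
      (ι_mul_ι_eq_zero_of_finrank_localization_eq_one L.subtype fun P _ => hL.2.2 P) hσ]
    ext y
    simpa [hker] using fun hy : y ∈ _ => range_ι_comp_mul_exteriorPower_le L.subtype k hy
  exact Submodule.equivMapOfInjective _ (Submodule.injective_subtype _) _ ≪≫ₗ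
    LinearEquiv.ofEq _ _ hrange ≪≫ₗ (LinearEquiv.ofInjective Φ hΦ).symm

/-- **dual Pascal's rule.** Let `M` be a finitely generated projective module
over a commutative ring `R`, `L ⊆ M` a direct summand which is projective of rank 1,
`g : M → M/L` the quotient map, and `s ≥ 1`.  Then the kernel of the induced map
`⋀^s g : ⋀^s M → ⋀^s (M/L)` equals the submodule `L ∧ ⋀^{s-1} M`, and this kernel is
isomorphic to `L ⊗ ⋀^{s-1}(M/L)`. -/
theorem kernel_exteriorPower_quotient_map
    (R : Type*) [CommRing R] (M : Type*) [AddCommGroup M] [Module R M]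
    [Module.Finite R M] [Module.Projective R M]
    (L : Submodule R M) (hsummand : ∃ L' : Submodule R M, IsCompl L L')
    (hL : IsFGProjOfRank R ↥L 1) (s : ℕ) (hs : 1 ≤ s)
    (ψ : ⋀[R]^s M →ₗ[R] ⋀[R]^s (M ⧸ L))
    (hψ : ∀ x : ⋀[R]^s M,
      (ψ x : ExteriorAlgebra R (M ⧸ L)) = ExteriorAlgebra.map L.mkQ (x : ExteriorAlgebra R M)) :
    (∀ x : ⋀[R]^s M, ψ x = 0 ↔
      (x : ExteriorAlgebra R M) ∈
        LinearMap.range (ExteriorAlgebra.ι R ∘ₗ L.subtype) *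
          (LinearMap.range (ExteriorAlgebra.ι R : M →ₗ[R] ExteriorAlgebra R M)) ^ (s - 1)) ∧
    Nonempty (↥(LinearMap.ker ψ) ≃ₗ[R] TensorProduct R ↥L ↥(⋀[R]^(s - 1) (M ⧸ L))) :=
  kernel_exteriorPower_quotient_map_general R M L hsummand hL s hs ψ hψ
end

section
/- Let K be a field and V a K-vector space of finite dimension at least 3. If φ : V → V is a linear automorphism such that the induced automorphism Λ²φ of Λ²V is the identity, then φ = id_V or φ = -id_V. -/
open ExteriorAlgebra Module

/-!
Write `∧` for the product of `ι`-images. From `⋀²φ = id` we get `φ u ∧ φ v = u ∧ v`. If some `v`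
and `φ v` were independent, extend them by a vector `u` (dimension `≥ 3`) to an independent triple;
then `u ∧ v ∧ φ v = φ u ∧ φ v ∧ φ v = 0`, contradicting independence. So every vector is an
eigenvector and `φ = a • id`, and evaluating on an independent pair gives `a² = 1`.
-/

namespace ExteriorAlgebra

variable {K E : Type*} [Field K] [AddCommGroup E] [Module K E]

theorem ιMulti_ne_zero_of_linearIndependent {n : ℕ} {v : Fin n → E}
    (hv : LinearIndependent K v) : ιMulti K n v ≠ 0 := by
  let s : Set.powersetCard (Fin n) n := ⟨Finset.univ, Finset.card_fin n⟩
  have hs : ⇑(Set.powersetCard.ofFinEmbEquiv.symm s) = id :=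
    (Finset.orderEmbOfFin_unique _ (fun _ => Finset.mem_univ _) strictMono_id).symm
  intro h
  refine (exteriorPower.ιMulti_family_linearIndependent_field (n := n) hv).ne_zero s ?_
  ext
  simpa [exteriorPower.ιMulti_family, hs] using h

theorem ι_mul_ι_ne_zero {u v : E} (h : LinearIndependent K ![u, v]) : ι K u * ι K v ≠ 0 := by
  simpa [ιMulti_apply, List.ofFn_succ] using ιMulti_ne_zero_of_linearIndependent h

theorem ι_mul_ι_mul_ι_ne_zero {u v w : E} (h : LinearIndependent K ![u, v, w]) :
    ι K u * ι K v * ι K w ≠ 0 := by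
  simpa [ιMulti_apply, List.ofFn_succ, mul_assoc] using ιMulti_ne_zero_of_linearIndependent h

theorem ι_mul_ι_mem_exteriorPower_two (u v : E) : ι K u * ι K v ∈ ⋀[K]^2 E := by
  rw [ExteriorAlgebra.exteriorPower, sq]
  exact Submodule.mul_mem_mul (LinearMap.mem_range_self _ u) (LinearMap.mem_range_self _ v)

theorem exists_eq_smul_id_of_forall_ι_mul_ι_apply_eq (hdim : 3 ≤ finrank K E) {f : E →ₗ[K] E}
    (hf : ∀ u v, ι K (f u) * ι K (f v) = ι K u * ι K v) : ∃ a : K, f = a • 1 := by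
  refine LinearMap.exists_eq_smul_id_of_forall_notLinearIndependent fun v hv => ?_
  obtain ⟨u, hu⟩ := exists_linearIndependent_cons_of_lt_finrank hv hdim
  apply ι_mul_ι_mul_ι_ne_zero hu
  calc ι K u * ι K v * ι K (f v) = ι K (f u) * ι K (f v) * ι K (f v) := by rw [hf]
    _ = 0 := by rw [mul_assoc, ι_sq_zero, mul_zero]

theorem mul_self_eq_one_of_forall_ι_smul_mul_ι_smul_eq (hdim : 2 ≤ finrank K E) {a : K}
    (ha : ∀ u v : E, ι K (a • u) * ι K (a • v) = ι K u * ι K v) : a * a = 1 := by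
  have : Nontrivial E := nontrivial_of_finrank_pos (R := K) (by omega)
  obtain ⟨u, hu⟩ := exists_ne (0 : E)
  obtain ⟨v, huv⟩ := exists_linearIndependent_pair_of_one_lt_finrank (R := K) (by omega) hu
  refine smul_left_injective K (ι_mul_ι_ne_zero huv) ?_
  simpa only [map_smul, smul_mul_smul_comm, one_smul] using ha u v

end ExteriorAlgebra

theorem eq_id_or_neg_id_of_exteriorPower_map_eq_id_general
    (K : Type*) [Field K] (V : Type*) [AddCommGroup V] [Module K V]
    (hdim : 3 ≤ Module.finrank K V)
    (φ : V →ₗ[K] V)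
    (hid : ∀ x ∈ ⋀[K]^2 V, ExteriorAlgebra.map φ x = x) :
    φ = LinearMap.id ∨ φ = -LinearMap.id := by
  have hwedge : ∀ u v, ι K (φ u) * ι K (φ v) = ι K u * ι K v := fun u v => by
    simpa only [map_mul, map_apply_ι] using hid _ (ι_mul_ι_mem_exteriorPower_two u v)
  obtain ⟨a, rfl⟩ := exists_eq_smul_id_of_forall_ι_mul_ι_apply_eq hdim hwedge
  have ha : a * a = 1 := mul_self_eq_one_of_forall_ι_smul_mul_ι_smul_eq (by omega) hwedge
  rcases mul_self_eq_one_iff.1 ha with rfl | rfl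
  · exact Or.inl (one_smul K _)
  · exact Or.inr (neg_one_smul K _)

/-- Let `V` be a `K`-vector space of finite dimension `≥ 3`.  If a linear
automorphism `φ` of `V` induces the identity on `⋀² V`, then `φ = ±id`. -/
theorem eq_id_or_neg_id_of_exteriorPower_map_eq_id
    (K : Type*) [Field K] (V : Type*) [AddCommGroup V] [Module K V]
    [FiniteDimensional K V] (hdim : 3 ≤ Module.finrank K V)
    (φ : V →ₗ[K] V) (hφ : Function.Bijective φ)
    (hid : ∀ x ∈ ⋀[K]^2 V, ExteriorAlgebra.map φ x = x) :
    φ = LinearMap.id ∨ φ = -LinearMap.id :=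
  eq_id_or_neg_id_of_exteriorPower_map_eq_id_general K V hdim φ hid
end

section
/- Let R be a commutative ring, M a finitely generated projective R-module, and f : M → R a surjective R-linear map. Then the Koszul complex of f is exact: for every s ≥ 1, the kernel of the contraction d_sf : Λ^sM → Λ^{s-1}M equals the image of d_{s+1}f : Λ^{s+1}M → Λ^sM, and d_1f = f is surjective. -/
open ExteriorAlgebra

section Aux

variable {R : Type*} [CommRing R] {M : Type*} [AddCommGroup M] [Module R M]

/-- The interior product `contractLeft f` realizes the Koszul contraction formula on wedges. -/
lemma contract_ιMulti (f : M →ₗ[R] R) (n : ℕ) (v : Fin (n + 1) → M) :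
    CliffordAlgebra.contractLeft (Q := (0 : QuadraticForm R M)) f
        (ExteriorAlgebra.ιMulti R (n + 1) v) =
      ∑ j : Fin (n + 1), ((-1 : R) ^ (j : ℕ) * f (v j)) •
        ExteriorAlgebra.ιMulti R n (fun i => v (j.succAbove i)) := by
  have h0 : ∀ (m : ℕ) (w : Fin (m + 1) → M), ExteriorAlgebra.ιMulti R (m + 1) w
      = ExteriorAlgebra.ι R (w 0) * ExteriorAlgebra.ιMulti R m (fun i => w i.succ) := by
    intro m w
    rw [ExteriorAlgebra.ιMulti_succ_apply]
    rfl
  induction n with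
  | zero =>
      simp [h0 0 v, CliffordAlgebra.contractLeft_ι_mul, Algebra.algebraMap_eq_smul_one]
  | succ n ih =>
      rw [h0 (n + 1) v, CliffordAlgebra.contractLeft_ι_mul]
      conv_rhs => rw [Fin.sum_univ_succ]
      rw [ih, sub_eq_add_neg]
      congr 1
      · simp only [Fin.val_zero, pow_zero, one_mul, Fin.zero_succAbove]
      · rw [Finset.mul_sum, ← Finset.sum_neg_distrib]
        refine Finset.sum_congr rfl fun i _ => ?_
        rw [h0 n (fun k => v (i.succ.succAbove k))]
        simp only [Fin.succ_succAbove_zero, Fin.succ_succAbove_succ]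
        rw [mul_smul_comm, ← neg_smul]
        congr 1
        simp only [Fin.val_succ, pow_succ]
        ring

/-- Any map satisfying the Koszul contraction formula agrees with `contractLeft f`. -/
lemma koszulFormula_eq_contract {f : M →ₗ[R] R} {n : ℕ}
    {d : ⋀[R]^(n + 1) M →ₗ[R] ⋀[R]^n M} (hd : KoszulFormula f n d)
    (x : ⋀[R]^(n + 1) M) :
    (d x : ExteriorAlgebra R M) =
      CliffordAlgebra.contractLeft (Q := (0 : QuadraticForm R M)) f
        (x : ExteriorAlgebra R M) := by
  obtain ⟨y, hy⟩ := x
  have hspan : ∀ z, z ∈ Submodule.span R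
      (Set.range (ExteriorAlgebra.ιMulti R (n + 1) (M := M))) → z ∈ ⋀[R]^(n + 1) M := by
    intro z hz
    rwa [ExteriorAlgebra.ιMulti_span_fixedDegree] at hz
  have hy' : y ∈ Submodule.span R
      (Set.range (ExteriorAlgebra.ιMulti R (n + 1) (M := M))) := by
    rwa [ExteriorAlgebra.ιMulti_span_fixedDegree]
  have key : ∀ z (hz : z ∈ Submodule.span R
      (Set.range (ExteriorAlgebra.ιMulti R (n + 1) (M := M)))),
      (d ⟨z, hspan z hz⟩ : ExteriorAlgebra R M) =
        CliffordAlgebra.contractLeft (Q := (0 : QuadraticForm R M)) f z := by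
    intro z hz
    induction hz using Submodule.span_induction with
    | mem w hw =>
        obtain ⟨v, rfl⟩ := hw
        rw [hd v _ rfl, contract_ιMulti]
    | zero =>
        have : (⟨0, hspan 0 (Submodule.zero_mem _)⟩ : ⋀[R]^(n + 1) M) = 0 := rfl
        rw [this, map_zero, map_zero]
        rfl
    | add a b ha hb iha ihb =>
        have : (⟨a + b, hspan _ (Submodule.add_mem _ ha hb)⟩ : ⋀[R]^(n + 1) M) =
            ⟨a, hspan a ha⟩ + ⟨b, hspan b hb⟩ := rfl
        rw [this, map_add, map_add, Submodule.coe_add, iha, ihb]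
    | smul r a ha iha =>
        have : (⟨r • a, hspan _ (Submodule.smul_mem _ r ha)⟩ : ⋀[R]^(n + 1) M) =
            r • ⟨a, hspan a ha⟩ := rfl
        rw [this, map_smul, map_smul, Submodule.coe_smul, iha]
  have := key y hy'
  convert this using 2

end Aux

/-- For a finitely generated projective module `M` over a commutative ring
`R` and a surjective linear map `f : M → R`, the Koszul complex of `f` is exact: for every
`s ≥ 1` the kernel of the contraction `d_sf : ⋀^s M → ⋀^{s-1} M` equals the image of
`d_{s+1}f`, and `d_1f = f` is surjective. -/
theorem koszul_complex_exact
    (R : Type*) [CommRing R] (M : Type*) [AddCommGroup M] [Module R M]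
    [Module.Finite R M] [Module.Projective R M]
    (f : M →ₗ[R] R) (hf : Function.Surjective f) :
    (∀ (n : ℕ) (d₁ : ⋀[R]^(n + 2) M →ₗ[R] ⋀[R]^(n + 1) M)
        (d₂ : ⋀[R]^(n + 1) M →ₗ[R] ⋀[R]^n M),
      KoszulFormula f (n + 1) d₁ → KoszulFormula f n d₂ →
      LinearMap.ker d₂ = LinearMap.range d₁) ∧
    (∀ d : ⋀[R]^1 M →ₗ[R] ⋀[R]^0 M, KoszulFormula f 0 d → Function.Surjective d) := by
  constructor
  · intro n d₁ d₂ h₁ h₂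
    ext x
    simp only [LinearMap.mem_ker, LinearMap.mem_range]
    constructor
    · intro hx
      obtain ⟨e, he⟩ := hf 1
      have hz : ExteriorAlgebra.ι R e * (x : ExteriorAlgebra R M) ∈ ⋀[R]^(n + 2) M := by
        show _ ∈ LinearMap.range (ExteriorAlgebra.ι R : M →ₗ[R] ExteriorAlgebra R M) ^ (n + 2)
        rw [show (n + 2) = 1 + (n + 1) by ring, pow_add, pow_one]
        exact Submodule.mul_mem_mul (LinearMap.mem_range_self _ _) x.2
      refine ⟨⟨_, hz⟩, ?_⟩
      apply Subtype.ext
      rw [koszulFormula_eq_contract h₁]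
      show CliffordAlgebra.contractLeft (Q := (0 : QuadraticForm R M)) f
        (ExteriorAlgebra.ι R e * (x : ExteriorAlgebra R M)) = (x : ExteriorAlgebra R M)
      have step := CliffordAlgebra.contractLeft_ι_mul (Q := (0 : QuadraticForm R M))
        (d := f) e (x : ExteriorAlgebra R M)
      rw [step, ← koszulFormula_eq_contract h₂ x, hx, he]
      simp
    · rintro ⟨z, rfl⟩
      apply Subtype.ext
      rw [koszulFormula_eq_contract h₂, koszulFormula_eq_contract h₁ z,
        CliffordAlgebra.contractLeft_contractLeft]
      rfl
  · intro d hd y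
    have h : (y : ExteriorAlgebra R M) ∈
        LinearMap.range (ExteriorAlgebra.ι R : M →ₗ[R] ExteriorAlgebra R M) ^ 0 := y.2
    rw [pow_zero] at h
    obtain ⟨r, hr⟩ := Submodule.mem_one.mp h
    obtain ⟨m, hm⟩ := hf r
    have hmem : ExteriorAlgebra.ι R m ∈ ⋀[R]^1 M := by
      show _ ∈ LinearMap.range (ExteriorAlgebra.ι R : M →ₗ[R] ExteriorAlgebra R M) ^ 1
      rw [pow_one]
      exact LinearMap.mem_range_self _ _
    refine ⟨⟨_, hmem⟩, ?_⟩
    apply Subtype.ext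
    rw [koszulFormula_eq_contract hd]
    show CliffordAlgebra.contractLeft (Q := (0 : QuadraticForm R M)) f
      (ExteriorAlgebra.ι R m) = (y : ExteriorAlgebra R M)
    rw [CliffordAlgebra.contractLeft_ι, hm, hr]
end
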